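/- For λ ∈ ℂ with 0 < |λ| < 1, the multiplication operator M_λ : f ↦ λ·f on the Fréchet space H(ℂ) of entire functions has the positive shadowing property. -/

import Mathlib

/-- The k-th seminorm on entire functions: sup of ‖f z‖ on the ball of radius k. -/
noncomputable def entireSeminorm (k : ℕ) (f : ℂ → ℂ) : ℝ :=
  sSup ((fun z => ‖f z‖) '' Metric.ball (0 : ℂ) k)

/-- The canonical complete invariant metric on H(ℂ). -/
noncomputable def entireDist (f g : ℂ → ℂ) : ℝ :=
  ∑' k : ℕ, (1 / 2 : ℝ) ^ (k + 1) * min 1 (entireSeminorm (k + 1) (fun z => f z - g z))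

/-
Pointwise on a disc, the pseudo-orbit condition reads `|λ f_j(z) - f_{j+1}(z)| ≤ δ`, and the
errors are damped geometrically along the orbit: `f_{j+1} - λ^{j+1} f_0 = (f_{j+1} - λ f_j) +
λ (f_j - λ^j f_0)`, so `f_0` itself shadows the pseudo-orbit up to `δ / (1 - |λ|)` in every
seminorm. A small `d`-distance controls finitely many seminorms, and the remaining tail of the
series defining `d` is small, which turns this into shadowing for the metric.
-/

open Metric

section GeometricShadowing

variable {𝕜 E : Type*} [NormedField 𝕜] [SeminormedAddCommGroup E] [NormedSpace 𝕜 E]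

theorem norm_sub_pow_smul_le_of_norm_smul_sub_le {l : 𝕜} (hl : ‖l‖ < 1) {x : ℕ → E}
    {δ : ℝ} (h : ∀ j, ‖l • x j - x (j + 1)‖ ≤ δ) (j : ℕ) :
    ‖x j - l ^ j • x 0‖ ≤ δ / (1 - ‖l‖) := by
  have hl' : 0 < 1 - ‖l‖ := sub_pos.mpr hl
  have hδ : 0 ≤ δ := (norm_nonneg _).trans (h 0)
  induction j with
  | zero => simpa using div_nonneg hδ hl'.le
  | succ j ih =>
    calc ‖x (j + 1) - l ^ (j + 1) • x 0‖
        = ‖-(l • x j - x (j + 1)) + l • (x j - l ^ j • x 0)‖ := by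
          rw [smul_sub, smul_smul, ← pow_succ']; abel_nf
      _ ≤ δ + ‖l‖ * (δ / (1 - ‖l‖)) := by
          refine (norm_add_le _ _).trans (add_le_add ((norm_neg _).trans_le (h j)) ?_)
          rw [norm_smul]
          exact mul_le_mul_of_nonneg_left ih (norm_nonneg l)
      _ = δ / (1 - ‖l‖) := by field_simp; ring

end GeometricShadowing

section Seminorm

variable {f : ℂ → ℂ}

theorem entireSeminorm_nonneg (k : ℕ) (f : ℂ → ℂ) : 0 ≤ entireSeminorm k f :=
  Real.sSup_nonneg (by rintro _ ⟨z, _, rfl⟩; positivity)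

theorem entireSeminorm_le {k : ℕ} {M : ℝ} (hM : 0 ≤ M)
    (h : ∀ z ∈ ball (0 : ℂ) k, ‖f z‖ ≤ M) : entireSeminorm k f ≤ M :=
  Real.sSup_le (by rintro _ ⟨z, hz, rfl⟩; exact h z hz) hM

theorem norm_le_entireSeminorm (hf : Continuous f) {k : ℕ} {z : ℂ}
    (hz : z ∈ ball (0 : ℂ) k) : ‖f z‖ ≤ entireSeminorm k f := by
  have hbdd : BddAbove ((fun z => ‖f z‖) '' closedBall (0 : ℂ) k) :=
    (isCompact_closedBall _ _).bddAbove_image hf.norm.continuousOn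
  exact le_csSup (hbdd.mono (Set.image_mono ball_subset_closedBall)) ⟨z, hz, rfl⟩

theorem entireSeminorm_mono (hf : Continuous f) {m k : ℕ} (h : m ≤ k) :
    entireSeminorm m f ≤ entireSeminorm k f :=
  entireSeminorm_le (entireSeminorm_nonneg k f) fun _ hz =>
    norm_le_entireSeminorm hf (ball_subset_ball (by exact_mod_cast h) hz)

end Seminorm

section Dist

variable {f g : ℂ → ℂ}

theorem entireDist_term_le (f g : ℂ → ℂ) (k : ℕ) :
    (1 / 2 : ℝ) ^ (k + 1) * min 1 (entireSeminorm (k + 1) (fun z => f z - g z))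
      ≤ (1 / 2 : ℝ) ^ (k + 1) :=
  mul_le_of_le_one_right (by positivity) (min_le_left _ _)

theorem entireDist_term_nonneg (f g : ℂ → ℂ) (k : ℕ) :
    0 ≤ (1 / 2 : ℝ) ^ (k + 1) * min 1 (entireSeminorm (k + 1) (fun z => f z - g z)) :=
  mul_nonneg (by positivity) (le_min zero_le_one (entireSeminorm_nonneg _ _))

theorem summable_entireDist_term (f g : ℂ → ℂ) :
    Summable fun k : ℕ =>
      (1 / 2 : ℝ) ^ (k + 1) * min 1 (entireSeminorm (k + 1) (fun z => f z - g z)) :=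
  (summable_geometric_two.mul_right (1 / 2)).of_nonneg_of_le (entireDist_term_nonneg f g)
    fun k => (entireDist_term_le f g k).trans_eq (pow_succ _ _)

theorem entireSeminorm_le_of_entireDist_le {k : ℕ} {c : ℝ} (hc : c < 1)
    (h : entireDist f g ≤ (1 / 2 : ℝ) ^ (k + 1) * c) :
    entireSeminorm (k + 1) (fun z => f z - g z) ≤ c := by
  have hterm := ((summable_entireDist_term f g).le_tsum k
    fun j _ => entireDist_term_nonneg f g j).trans h
  have hmin := le_of_mul_le_mul_left hterm (by positivity)
  exact (min_le_iff.mp hmin).resolve_left (by linarith)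

/-- The first `N` terms of `entireDist` are controlled by the `N`-th seminorm, the tail by
`∑_{k ≥ N} 2^{-(k+1)} = 2^{-N}`. -/
theorem entireDist_le_entireSeminorm_add (hf : Continuous f) (hg : Continuous g) (N : ℕ) :
    entireDist f g ≤ entireSeminorm N (fun z => f z - g z) + (1 / 2 : ℝ) ^ N := by
  set s := entireSeminorm N (fun z => f z - g z)
  rw [entireDist, ← (summable_entireDist_term f g).sum_add_tsum_nat_add N]
  gcongr
  · calc ∑ k ∈ Finset.range N,
          (1 / 2 : ℝ) ^ (k + 1) * min 1 (entireSeminorm (k + 1) fun z => f z - g z)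
        ≤ ∑ k ∈ Finset.range N, (1 / 2 : ℝ) ^ (k + 1) * s := by
          refine Finset.sum_le_sum fun k hk => ?_
          gcongr
          exact (min_le_right _ _).trans
            (entireSeminorm_mono (hf.sub hg) (Finset.mem_range.mp hk))
      _ = (1 / 2) * (∑ k ∈ Finset.range N, (1 / 2 : ℝ) ^ k) * s := by
          simp only [pow_succ', Finset.mul_sum, Finset.sum_mul]
      _ ≤ (1 / 2) * 2 * s := by
          gcongr
          · exact entireSeminorm_nonneg _ _
          · exact sum_geometric_two_le N
      _ = s := by ring
  · calc ∑' k : ℕ,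
          (1 / 2 : ℝ) ^ (k + N + 1) * min 1 (entireSeminorm (k + N + 1) fun z => f z - g z)
        ≤ ∑' k : ℕ, (1 / 2 : ℝ) ^ N / 2 / 2 ^ k := by
          refine Summable.tsum_le_tsum (fun k => (entireDist_term_le f g _).trans_eq ?_)
            ((summable_nat_add_iff N).mpr (summable_entireDist_term f g))
            (summable_geometric_two' _)
          rw [pow_succ, pow_add, one_div, inv_pow, inv_pow]; field_simp
      _ = (1 / 2 : ℝ) ^ N := tsum_geometric_two' _

end Dist

theorem stmt3_general (l : ℂ) (hl1 : ‖l‖ < 1) :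
    ∀ ε > (0 : ℝ), ∃ δ > (0 : ℝ), ∀ F : ℕ → (ℂ → ℂ),
      (∀ j, Differentiable ℂ (F j)) →
      (∀ j, entireDist (fun z => l * F j z) (F (j + 1)) ≤ δ) →
      ∃ f : ℂ → ℂ, Differentiable ℂ f ∧
        ∀ j, entireDist (F j) (fun z => l ^ j * f z) < ε := by
  intro ε hε
  have hl : 0 < 1 - ‖l‖ := sub_pos.mpr hl1
  obtain ⟨N, hN⟩ := exists_pow_lt_of_lt_one (half_pos hε) (by norm_num : (1 / 2 : ℝ) < 1)
  set c := min (1 / 2) ((1 - ‖l‖) * (ε / 2))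
  have hc : 0 < c := lt_min (by norm_num) (by positivity)
  have hc_shadow : c / (1 - ‖l‖) ≤ ε / 2 := (div_le_iff₀' hl).mpr (min_le_right _ _)
  refine ⟨(1 / 2) ^ (N + 1) * c, by positivity, fun F hF hd => ⟨F 0, hF 0, fun j => ?_⟩⟩
  have hcont : ∀ j, Continuous (F j) := fun j => (hF j).continuous
  have horbit : ∀ z ∈ ball (0 : ℂ) (N + 1 : ℕ), ∀ j, ‖l * F j z - F (j + 1) z‖ ≤ c :=
    fun z hz j =>
      (norm_le_entireSeminorm ((continuous_const.mul (hcont j)).sub (hcont _)) hz).trans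
        (entireSeminorm_le_of_entireDist_le
          ((min_le_left _ _).trans_lt (by norm_num)) (hd j))
  have hshadow : entireSeminorm (N + 1) (fun z => F j z - l ^ j * F 0 z) ≤ c / (1 - ‖l‖) :=
    entireSeminorm_le (by positivity) fun z hz =>
      norm_sub_pow_smul_le_of_norm_smul_sub_le hl1 (x := fun j => F j z) (horbit z hz) j
  calc entireDist (F j) (fun z => l ^ j * F 0 z)
      ≤ entireSeminorm (N + 1) (fun z => F j z - l ^ j * F 0 z) + (1 / 2) ^ (N + 1) :=
        entireDist_le_entireSeminorm_add (hcont j) (continuous_const.mul (hcont 0)) _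
    _ < ε / 2 + ε / 2 := add_lt_add_of_le_of_lt (hshadow.trans hc_shadow)
        ((pow_le_pow_of_le_one (by norm_num) (by norm_num) N.le_succ).trans_lt hN)
    _ = ε := add_halves ε

/-- For 0 < |λ| < 1, the multiplication operator M_λ on H(ℂ) has the
positive shadowing property. -/
theorem stmt3 (l : ℂ) (hl0 : 0 < ‖l‖) (hl1 : ‖l‖ < 1) :
    ∀ ε > (0 : ℝ), ∃ δ > (0 : ℝ), ∀ F : ℕ → (ℂ → ℂ),
      (∀ j, Differentiable ℂ (F j)) →
      (∀ j, entireDist (fun z => l * F j z) (F (j + 1)) ≤ δ) →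
      ∃ f : ℂ → ℂ, Differentiable ℂ f ∧
        ∀ j, entireDist (F j) (fun z => l ^ j * f z) < ε :=
  stmt3_general l hl1
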